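/- Let A be a DG commutative algebra and suppose for each k ≥ 0 we have a minimal DG algebra M(k) generated in degrees ≤ k, embeddings M(0) ⊆ M(1) ⊆ M(2) ⊆ …, and compatible morphisms M(k) → A, such that each M(k) → A induces an isomorphism on cohomology in degrees ≤ k and an injection in degree k+1. Then the union M = ⋃_k M(k) with the induced morphism M → A is a quasi-isomorphism, i.e., M is a minimal model of A. -/

import Mathlib

/-!
STATEMENT 2: Let A be a DG commutative algebra and suppose for each k ≥ 0 we
have a minimal DG algebra M(k) generated in degrees ≤ k, embeddings
M(0) ⊆ M(1) ⊆ …, and compatible morphisms M(k) → A inducing an isomorphism on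
cohomology in degrees ≤ k and an injection in degree k + 1.  Then the union
M = ⋃_k M(k) with the induced morphism M → A is a quasi-isomorphism, i.e. M is
a minimal model of A.

The union M is represented as an ambient graded algebra (R, 𝒜), free
graded-commutative on generators V (with V⁰ = V¹ = 0), carrying a differential
d; the increasing chain M(k) is the chain of subalgebras S(V^{≤k}) generated
by the generators of degrees ≤ k, each stable under d and minimal (d maps it
into the square of its augmentation ideal), and the compatible morphisms
M(k) → A are the restrictions of a single DG algebra morphism F : M → A.
-/

noncomputable section

variable {R : Type} [Ring R] [Algebra ℂ R]

/-- `𝒜` is an ℕ-grading of the ℂ-algebra `R`: an internal direct sum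
decomposition compatible with the multiplication. -/
def IsGrading (𝒜 : ℕ → Submodule ℂ R) : Prop :=
  DirectSum.IsInternal 𝒜 ∧ (1 : R) ∈ 𝒜 0 ∧
    ∀ i j : ℕ, ∀ x ∈ 𝒜 i, ∀ y ∈ 𝒜 j, x * y ∈ 𝒜 (i + j)

/-- Graded commutativity: `x y = (-1)^{ij} y x` for homogeneous `x, y` of
degrees `i, j`. -/
def IsGradedComm (𝒜 : ℕ → Submodule ℂ R) : Prop :=
  ∀ i j : ℕ, ∀ x ∈ 𝒜 i, ∀ y ∈ 𝒜 j, x * y = ((-1 : ℂ) ^ (i * j)) • (y * x)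

/-- `d` is a differential on the graded algebra `(R, 𝒜)`: degree `+1`,
square zero, and the graded Leibniz rule. -/
def IsDifferential (𝒜 : ℕ → Submodule ℂ R) (d : R →ₗ[ℂ] R) : Prop :=
  (∀ i : ℕ, ∀ x ∈ 𝒜 i, d x ∈ 𝒜 (i + 1)) ∧ (∀ x : R, d (d x) = 0) ∧
    ∀ i : ℕ, ∀ x ∈ 𝒜 i, ∀ y : R,
      d (x * y) = d x * y + ((-1 : ℂ) ^ i) • (x * d y)

/-- `(R, 𝒜)` is the free graded-commutative algebra `S(V)` on the graded
subspace of generators `V`: it is graded, graded-commutative, and satisfies the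
universal property that every degree-preserving linear map from `V` to a
graded-commutative graded algebra extends uniquely to a degree-preserving
algebra morphism. -/
def IsFreeGradedCommOn (𝒜 V : ℕ → Submodule ℂ R) : Prop :=
  IsGrading 𝒜 ∧ IsGradedComm 𝒜 ∧ (∀ i, V i ≤ 𝒜 i) ∧
    ∀ (R' : Type) [Ring R'] [Algebra ℂ R'] (𝒜' : ℕ → Submodule ℂ R'),
      IsGrading 𝒜' → IsGradedComm 𝒜' →
      ∀ φ : ∀ i : ℕ, (V i) →ₗ[ℂ] R', (∀ (i : ℕ) (v : V i), φ i v ∈ 𝒜' i) →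
      ∃! F : R →ₐ[ℂ] R',
        (∀ i : ℕ, ∀ x ∈ 𝒜 i, F x ∈ 𝒜' i) ∧ ∀ (i : ℕ) (v : V i), F v = φ i v

/-- The augmentation ideal `M⁺ = ⊕_{i>0} Mⁱ` of a graded algebra. -/
def PositivePart (𝒜 : ℕ → Submodule ℂ R) : Submodule ℂ R :=
  ⨆ i : ℕ, ⨆ _ : 0 < i, 𝒜 i

/-- A DG algebra `(R, 𝒜, d)` is minimal: free as a graded-commutative algebra,
`M¹ = 0`, and `d(M) ⊆ M⁺ · M⁺`. -/
def IsMinimal (𝒜 : ℕ → Submodule ℂ R) (d : R →ₗ[ℂ] R) : Prop :=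
  (∃ V : ℕ → Submodule ℂ R, IsFreeGradedCommOn 𝒜 V) ∧ 𝒜 1 = ⊥ ∧
    ∀ x : R, d x ∈ Submodule.span ℂ
      {z : R | ∃ a ∈ PositivePart 𝒜, ∃ b ∈ PositivePart 𝒜, z = a * b}

/-- Connectedness: `H⁰(A) = ℂ`, i.e. the closed elements of degree 0 are the
multiples of 1. -/
def IsConnectedDG (𝒜 : ℕ → Submodule ℂ R) (d : R →ₗ[ℂ] R) : Prop :=
  LinearMap.ker d ⊓ 𝒜 0 = Submodule.span ℂ {(1 : R)}

/-- Simple connectedness: `H¹(A) = 0`, i.e. every closed element of degree 1 is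
exact. -/
def IsSimplyConnectedDG (𝒜 : ℕ → Submodule ℂ R) (d : R →ₗ[ℂ] R) : Prop :=
  ∀ x ∈ 𝒜 1, d x = 0 → ∃ y : R, d y = x

/-- A map `F` between DG algebras induces an injection on degree-`i`
cohomology. -/
def InducesCohomInjAt (𝒜 : ℕ → Submodule ℂ R) (d : R →ₗ[ℂ] R)
    {R' : Type} [Ring R'] [Algebra ℂ R'] (𝒜' : ℕ → Submodule ℂ R')
    (d' : R' →ₗ[ℂ] R') (F : R → R') (i : ℕ) : Prop :=
  ∀ x ∈ 𝒜 i, d x = 0 → (∃ y' : R', d' y' = F x) → ∃ y : R, d y = x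

/-- A map `F` between DG algebras induces a surjection on degree-`i`
cohomology. -/
def InducesCohomSurjAt (𝒜 : ℕ → Submodule ℂ R) (d : R →ₗ[ℂ] R)
    {R' : Type} [Ring R'] [Algebra ℂ R'] (𝒜' : ℕ → Submodule ℂ R')
    (d' : R' →ₗ[ℂ] R') (F : R → R') (i : ℕ) : Prop :=
  ∀ x' ∈ 𝒜' i, d' x' = 0 → ∃ x ∈ 𝒜 i, d x = 0 ∧ ∃ y' : R', d' y' = x' - F x

/-- A map `F` between DG algebras induces an isomorphism on degree-`i`
cohomology. -/
def InducesCohomIsoAt (𝒜 : ℕ → Submodule ℂ R) (d : R →ₗ[ℂ] R)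
    {R' : Type} [Ring R'] [Algebra ℂ R'] (𝒜' : ℕ → Submodule ℂ R')
    (d' : R' →ₗ[ℂ] R') (F : R → R') (i : ℕ) : Prop :=
  InducesCohomInjAt 𝒜 d 𝒜' d' F i ∧ InducesCohomSurjAt 𝒜 d 𝒜' d' F i

/-!
Freeness forces `V` to generate `M`: the universal property, applied to the subalgebra
generated by `V` with its induced grading, gives a retraction of `M` onto it fixing `V`,
which by uniqueness is the identity. Hence every element of `M` lies in some `M(k)`, and
`M¹ = 0` because `V¹ = 0`. Minimality of `M` is then inherited from the `M(k)`, and a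
cocycle of `M` of degree `i` lies in some `M(k)` with `k ≥ i`, where `H^i(M(k)) → H^i(A)`
is already injective and surjective.
-/

theorem Algebra.exists_mem_adjoin_biUnion_Iic {ι K A : Type*} [Preorder ι] [IsDirectedOrder ι]
    [Nonempty ι] [CommSemiring K] [Semiring A] [Algebra K A] {s : ι → Set A} {x : A}
    (hx : x ∈ Algebra.adjoin K (⋃ i, s i)) :
    ∃ k, x ∈ Algebra.adjoin K (⋃ i ∈ Set.Iic k, s i) := by
  have hdir : Directed (· ≤ ·) fun k => Algebra.adjoin K (Set.accumulate s k) :=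
    Monotone.directed_le fun _ _ hkl => Algebra.adjoin_mono (Set.monotone_accumulate hkl)
  rwa [← Set.iUnion_accumulate, Algebra.adjoin_iUnion, ← SetLike.mem_coe,
    Subalgebra.coe_iSup_of_directed hdir, Set.mem_iUnion] at hx

theorem toSubmodule_adjoin_le_biSup {P : ℕ → Submodule ℂ R} (hone : (1 : R) ∈ P 0)
    (hmul : ∀ i j, P i * P j ≤ P (i + j)) (D : AddSubmonoid ℕ) {s : Set R}
    (hs : s ⊆ ⋃ i ∈ D, (P i : Set R)) :
    Subalgebra.toSubmodule (Algebra.adjoin ℂ s) ≤ ⨆ i ∈ D, P i := by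
  have hmulD : (⨆ i ∈ D, P i) * (⨆ j ∈ D, P j) ≤ ⨆ k ∈ D, P k := by
    simp only [Submodule.iSup_mul, Submodule.mul_iSup]
    exact iSup₂_le fun j hj => iSup₂_le fun i hi =>
      le_iSup₂_of_le (i + j) (D.add_mem hi hj) (hmul i j)
  let T := (⨆ i ∈ D, P i).toSubalgebra (le_biSup P D.zero_mem hone)
    fun x y hx hy => hmulD (Submodule.mul_mem_mul hx hy)
  refine Algebra.adjoin_le (S := T) fun x hx => ?_
  obtain ⟨i, hi, hxi⟩ := Set.mem_iUnion₂.1 (hs hx)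
  exact le_biSup P hi hxi

theorem IsGrading.comap_val {𝒜 : ℕ → Submodule ℂ R} (h𝒜 : IsGrading 𝒜) (S : Subalgebra ℂ R)
    (hS : Subalgebra.toSubmodule S ≤ ⨆ i, 𝒜 i ⊓ Subalgebra.toSubmodule S) :
    IsGrading fun i => (𝒜 i).comap S.val.toLinearMap := by
  obtain ⟨hint, hone, hmul⟩ := h𝒜
  refine ⟨?_, hone, fun i j x hx y hy => hmul i j _ hx _ hy⟩
  rw [DirectSum.isInternal_submodule_iff_iSupIndep_and_iSup_eq_top,
    iSupIndep_iff_finsetSum_eq_zero_imp_eq_zero]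
  constructor
  · intro s v hv hsum i hi
    exact Subtype.ext <| (iSupIndep_iff_finsetSum_eq_zero_imp_eq_zero 𝒜).1
      hint.submodule_iSupIndep s (fun i => v i) hv (by simpa using congrArg Subtype.val hsum) i hi
  · rw [← top_le_iff, ← Submodule.map_le_map_iff_of_injective (f := S.val.toLinearMap)
      Subtype.val_injective, Submodule.map_iSup]
    rintro _ ⟨x, -, rfl⟩
    refine (hS.trans <| iSup_mono fun i z hz => ?_) x.2
    exact ⟨⟨z, hz.2⟩, hz.1, rfl⟩

theorem IsGradedComm.comap_val {𝒜 : ℕ → Submodule ℂ R} (h𝒜 : IsGradedComm 𝒜)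
    (S : Subalgebra ℂ R) : IsGradedComm fun i => (𝒜 i).comap S.val.toLinearMap :=
  fun i j _ hx _ hy => Subtype.ext (h𝒜 i j _ hx _ hy)

namespace IsFreeGradedCommOn

variable {𝒜 V : ℕ → Submodule ℂ R}

theorem adjoin_eq_top (hfree : IsFreeGradedCommOn 𝒜 V) :
    Algebra.adjoin ℂ (⋃ i, (V i : Set R)) = ⊤ := by
  obtain ⟨hgr, hgc, hV, huniv⟩ := hfree
  obtain ⟨-, hone, hmul⟩ := id hgr
  set S := Algebra.adjoin ℂ (⋃ i, (V i : Set R))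
  have hVS : ∀ i, ∀ v ∈ V i, v ∈ S := fun i v hv =>
    Algebra.subset_adjoin (Set.mem_iUnion.2 ⟨i, hv⟩)
  have hS : Subalgebra.toSubmodule S ≤ ⨆ i, 𝒜 i ⊓ Subalgebra.toSubmodule S := by
    refine (toSubmodule_adjoin_le_biSup (P := fun i => 𝒜 i ⊓ Subalgebra.toSubmodule S)
      ⟨hone, S.one_mem⟩ (fun i j => Submodule.mul_le.2 fun x hx y hy =>
        ⟨hmul i j x hx.1 y hy.1, S.mul_mem hx.2 hy.2⟩) ⊤ fun v hv => ?_).trans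
      (iSup₂_le fun i _ => le_iSup (fun i => 𝒜 i ⊓ Subalgebra.toSubmodule S) i)
    obtain ⟨i, hv⟩ := Set.mem_iUnion.1 hv
    exact Set.mem_biUnion (AddSubmonoid.mem_top i) ⟨hV i hv, hVS i v hv⟩
  obtain ⟨G, ⟨hGdeg, hGV⟩, -⟩ := huniv S _ (hgr.comap_val S hS) (hgc.comap_val S)
    (fun i => (V i).subtype.codRestrict (Subalgebra.toSubmodule S) fun v => hVS i v v.2)
    (fun i v => hV i v.2)
  have hG : S.val.comp G = AlgHom.id ℂ R :=
    (huniv R 𝒜 hgr hgc (fun i => (V i).subtype) fun i v => hV i v.2).unique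
      ⟨fun i x hx => hGdeg i x hx, fun i v => congrArg Subtype.val (hGV i v)⟩
      ⟨fun i x hx => hx, fun i v => rfl⟩
  refine eq_top_iff.2 fun x _ => ?_
  have hx : S.val (G x) = x := DFunLike.congr_fun hG x
  exact hx ▸ (G x).2

theorem grading_one_eq_bot (hfree : IsFreeGradedCommOn 𝒜 V) (hV1 : V 1 = ⊥) : 𝒜 1 = ⊥ := by
  have htop := hfree.adjoin_eq_top
  obtain ⟨⟨hint, hone, hmul⟩, -, hV, -⟩ := hfree
  let D : AddSubmonoid ℕ :=
    { carrier := {i | i ≠ 1}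
      zero_mem' := zero_ne_one
      add_mem' := fun {i j} (hi : i ≠ 1) (hj : j ≠ 1) => show i + j ≠ 1 by omega }
  have hgen : ⊤ ≤ ⨆ i ∈ D, 𝒜 i := by
    rw [← Algebra.top_toSubmodule, ← htop]
    refine toSubmodule_adjoin_le_biSup hone
      (fun i j => Submodule.mul_le.2 fun x hx y hy => hmul i j x hx y hy) D fun v hv => ?_
    obtain ⟨i, hv⟩ := Set.mem_iUnion.1 hv
    by_cases hi : i = 1
    · subst hi
      rw [hV1, SetLike.mem_coe, Submodule.mem_bot] at hv
      exact Set.mem_biUnion D.zero_mem (hv ▸ zero_mem _)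
    · exact Set.mem_biUnion hi (hV i hv)
  exact (hint.submodule_iSupIndep 1).eq_bot_of_le (le_top.trans hgen)

end IsFreeGradedCommOn

theorem union_of_k_minimal_models_is_minimal_model_general
    {R : Type} [Ring R] [Algebra ℂ R] (𝒜 V : ℕ → Submodule ℂ R)
    (hV1 : V 1 = ⊥)
    (hfree : IsFreeGradedCommOn 𝒜 V)
    (d : R →ₗ[ℂ] R)
    {R' : Type} [Ring R'] [Algebra ℂ R'] (𝒜' : ℕ → Submodule ℂ R')
    (d' : R' →ₗ[ℂ] R')
    -- … and is a minimal DG algebra: d maps it into the square of its own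
    -- augmentation ideal
    (hmin : ∀ k : ℕ, ∀ x : R,
      x ∈ Algebra.adjoin ℂ (⋃ i ∈ Set.Iic k, (V i : Set R)) →
      d x ∈ Submodule.span ℂ
        {z : R | ∃ a ∈ PositivePart 𝒜 ⊓
            Subalgebra.toSubmodule (Algebra.adjoin ℂ (⋃ i ∈ Set.Iic k, (V i : Set R))),
          ∃ b ∈ PositivePart 𝒜 ⊓
            Subalgebra.toSubmodule (Algebra.adjoin ℂ (⋃ i ∈ Set.Iic k, (V i : Set R))),
          z = a * b})
    -- a morphism of DG algebras F : M → A, restricting to the compatible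
    -- morphisms M(k) → A
    (F : R →ₐ[ℂ] R')
    -- each restriction F|_{M(k)} induces an isomorphism on cohomology in
    -- degrees ≤ k (cohomology of M(k) computed inside M(k)) …
    (hiso : ∀ k : ℕ, ∀ i ≤ k,
      (∀ x : R, x ∈ 𝒜 i →
        x ∈ Algebra.adjoin ℂ (⋃ i' ∈ Set.Iic k, (V i' : Set R)) →
        d x = 0 → (∃ y' : R', d' y' = F x) →
        ∃ y ∈ Algebra.adjoin ℂ (⋃ i' ∈ Set.Iic k, (V i' : Set R)), d y = x) ∧
      (∀ x' ∈ 𝒜' i, d' x' = 0 →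
        ∃ x : R, x ∈ 𝒜 i ∧
          x ∈ Algebra.adjoin ℂ (⋃ i' ∈ Set.Iic k, (V i' : Set R)) ∧
          d x = 0 ∧ ∃ y' : R', d' y' = x' - F x)) :
    -- then M is minimal and F : M → A is a quasi-isomorphism: M is a minimal
    -- model of A
    IsMinimal 𝒜 d ∧ ∀ i : ℕ, InducesCohomIsoAt 𝒜 d 𝒜' d' F i := by
  have hcover : ∀ x : R, ∃ k, x ∈ Algebra.adjoin ℂ (⋃ i ∈ Set.Iic k, (V i : Set R)) :=
    fun x => Algebra.exists_mem_adjoin_biUnion_Iic (hfree.adjoin_eq_top ▸ Algebra.mem_top)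
  refine ⟨⟨⟨V, hfree⟩, hfree.grading_one_eq_bot hV1, fun x => ?_⟩, fun i => ⟨?_, ?_⟩⟩
  · obtain ⟨k, hk⟩ := hcover x
    refine Submodule.span_mono ?_ (hmin k x hk)
    rintro z ⟨a, ⟨ha, -⟩, b, ⟨hb, -⟩, rfl⟩
    exact ⟨a, ha, b, hb, rfl⟩
  · intro x hx hdx hexact
    obtain ⟨k, hk⟩ := hcover x
    have hk' := Algebra.adjoin_mono
      (Set.biUnion_subset_biUnion_left (Set.Iic_subset_Iic.2 (le_max_left k i))) hk
    obtain ⟨y, -, hy⟩ := (hiso (max k i) i (le_max_right k i)).1 x hx hk' hdx hexact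
    exact ⟨y, hy⟩
  · intro x' hx' hdx'
    obtain ⟨x, hx, -, hdx, hexact⟩ := (hiso i i le_rfl).2 x' hx' hdx'
    exact ⟨x, hx, hdx, hexact⟩

/-- The union of an increasing sequence of k-minimal models of `A` is a
minimal model of `A`. -/
theorem union_of_k_minimal_models_is_minimal_model
    {R : Type} [Ring R] [Algebra ℂ R] (𝒜 V : ℕ → Submodule ℂ R)
    (hV0 : V 0 = ⊥) (hV1 : V 1 = ⊥)
    (hfree : IsFreeGradedCommOn 𝒜 V)
    (d : R →ₗ[ℂ] R) (hd : IsDifferential 𝒜 d)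
    {R' : Type} [Ring R'] [Algebra ℂ R'] (𝒜' : ℕ → Submodule ℂ R')
    (d' : R' →ₗ[ℂ] R')
    (hgr' : IsGrading 𝒜') (hgc' : IsGradedComm 𝒜') (hd' : IsDifferential 𝒜' d')
    -- each M(k) = S(V^{≤k}) is d-stable …
    (hstable : ∀ k : ℕ, ∀ x : R,
      x ∈ Algebra.adjoin ℂ (⋃ i ∈ Set.Iic k, (V i : Set R)) →
      d x ∈ Algebra.adjoin ℂ (⋃ i ∈ Set.Iic k, (V i : Set R)))
    -- … and is a minimal DG algebra: d maps it into the square of its own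
    -- augmentation ideal
    (hmin : ∀ k : ℕ, ∀ x : R,
      x ∈ Algebra.adjoin ℂ (⋃ i ∈ Set.Iic k, (V i : Set R)) →
      d x ∈ Submodule.span ℂ
        {z : R | ∃ a ∈ PositivePart 𝒜 ⊓
            Subalgebra.toSubmodule (Algebra.adjoin ℂ (⋃ i ∈ Set.Iic k, (V i : Set R))),
          ∃ b ∈ PositivePart 𝒜 ⊓
            Subalgebra.toSubmodule (Algebra.adjoin ℂ (⋃ i ∈ Set.Iic k, (V i : Set R))),
          z = a * b})
    -- a morphism of DG algebras F : M → A, restricting to the compatible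
    -- morphisms M(k) → A
    (F : R →ₐ[ℂ] R')
    (hFdeg : ∀ i : ℕ, ∀ x ∈ 𝒜 i, F x ∈ 𝒜' i)
    (hFd : ∀ x : R, F (d x) = d' (F x))
    -- each restriction F|_{M(k)} induces an isomorphism on cohomology in
    -- degrees ≤ k (cohomology of M(k) computed inside M(k)) …
    (hiso : ∀ k : ℕ, ∀ i ≤ k,
      (∀ x : R, x ∈ 𝒜 i →
        x ∈ Algebra.adjoin ℂ (⋃ i' ∈ Set.Iic k, (V i' : Set R)) →
        d x = 0 → (∃ y' : R', d' y' = F x) →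
        ∃ y ∈ Algebra.adjoin ℂ (⋃ i' ∈ Set.Iic k, (V i' : Set R)), d y = x) ∧
      (∀ x' ∈ 𝒜' i, d' x' = 0 →
        ∃ x : R, x ∈ 𝒜 i ∧
          x ∈ Algebra.adjoin ℂ (⋃ i' ∈ Set.Iic k, (V i' : Set R)) ∧
          d x = 0 ∧ ∃ y' : R', d' y' = x' - F x))
    -- … and an injection on cohomology in degree k + 1
    (hinj : ∀ k : ℕ, ∀ x : R, x ∈ 𝒜 (k + 1) →
      x ∈ Algebra.adjoin ℂ (⋃ i' ∈ Set.Iic k, (V i' : Set R)) →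
      d x = 0 → (∃ y' : R', d' y' = F x) →
      ∃ y ∈ Algebra.adjoin ℂ (⋃ i' ∈ Set.Iic k, (V i' : Set R)), d y = x) :
    -- then M is minimal and F : M → A is a quasi-isomorphism: M is a minimal
    -- model of A
    IsMinimal 𝒜 d ∧ ∀ i : ℕ, InducesCohomIsoAt 𝒜 d 𝒜' d' F i :=
  union_of_k_minimal_models_is_minimal_model_general 𝒜 V hV1 hfree d 𝒜' d' hmin F hiso
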